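/- Let Z be a finite nonempty antichain of connected graphs under the minor relation, let k ≥ 1 and z, d ∈ ℕ, let G be a graph with a tree decomposition (T, β) of adhesion at most z, and let α : V(T) → 2^{V(G)} be such that for every node t, α(t) ⊆ β(t), |α(t)| ≤ d, and (β(t), α(t)) is a Z-local cover of G. Then either G contains k pairwise vertex-disjoint subgraphs, each containing some member of Z as a minor, or there exists a Z-local cover (X, A) of G such that G − X contains no member of Z as a minor, |A| ≤ (k − 1)·(z + d), and every connected component C of G − X satisfies |N_G(V(C))| ≤ z. (The combinatorial content of Lemma 5.6 of the paper, stated for antichains of connected graphs, for which the non-planar parts npl(Z) in the paper's definition of Z-local cover are replaced by the members of Z themselves.) -/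

import Mathlib

open SimpleGraph

/-- `H` is a minor of `G`: there is a family of pairwise disjoint nonempty subsets of `V(G)`,
one for each vertex of `H`, each inducing a connected subgraph of `G`, such that every edge
of `H` is realized by an edge of `G` between the corresponding branch sets. -/
def IsMinorOf {V : Type*} {W : Type*} (H : SimpleGraph V) (G : SimpleGraph W) : Prop :=
  ∃ X : V → Set W,
    (∀ a, (X a).Nonempty) ∧
    (∀ a b, a ≠ b → Disjoint (X a) (X b)) ∧
    (∀ a, (G.induce (X a)).Connected) ∧
    ∀ a b, H.Adj a b → ∃ x ∈ X a, ∃ y ∈ X b, G.Adj x y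

/-- The graph obtained from `M` by dissolving (suppressing) all vertices outside `T`:
two vertices of `T` are adjacent iff they are joined in `M` by a walk of positive length all
of whose internal vertices lie outside `T`. -/
def dissolve {W : Type*} (M : SimpleGraph W) (T : Set W) : SimpleGraph T :=
  SimpleGraph.fromRel fun a b =>
    ∃ p : M.Walk (a : W) (b : W),
      ∀ v ∈ p.support, v ≠ (a : W) → v ≠ (b : W) → v ∉ T

/-- `(M, T)` is an `H`-expansion (here `M` is a subgraph of an ambient graph `G`):
`T ⊆ V(M)`, every vertex of `V(M) ∖ T` has degree `2` in `M`, and the graph obtained from `M`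
by dissolving all vertices not in `T` contains `H` as a minor. -/
def IsExpansion {V : Type*} {W : Type*} (H : SimpleGraph V) {G : SimpleGraph W}
    (M : G.Subgraph) (T : Set W) : Prop :=
  T ⊆ M.verts ∧
  (∀ v ∈ M.verts, v ∉ T → (M.neighborSet v).ncard = 2) ∧
  IsMinorOf H (dissolve M.coe {v : M.verts | (v : W) ∈ T})

/-- `M` is an `H`-inflated copy in `G`: `(M, T)` is a minimal `H`-expansion for some `T`. -/
def IsInflatedCopy {V : Type*} {W : Type*} (H : SimpleGraph V) {G : SimpleGraph W}
    (M : G.Subgraph) : Prop :=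
  ∃ T : Set W, IsExpansion H M T ∧
    ∀ M' : G.Subgraph, M' ≤ M → IsExpansion H M' T → M' = M

/-- A tree decomposition of `G` with tree-node type `τ`: a tree on `τ` together with bags
covering all vertices and edges of `G`, such that for every vertex `v` of `G` the nodes whose
bag contains `v` induce a connected subgraph (a subtree) of the tree. -/
structure TreeDecomp {W : Type*} (G : SimpleGraph W) (τ : Type*) where
  tree : SimpleGraph τ
  isTree : tree.IsTree
  bag : τ → Set W
  bag_vert : ∀ v : W, ∃ t, v ∈ bag t
  bag_edge : ∀ ⦃v w : W⦄, G.Adj v w → ∃ t, v ∈ bag t ∧ w ∈ bag t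
  bag_conn : ∀ v : W, (tree.induce {t | v ∈ bag t}).Connected

/-- `(X, A)` is a `Z`-local cover of `G` for a family `Z` of graphs: `A ⊆ X ⊆ V(G)` and, for
every member `Z i` of the family, every `(Z i)`-inflated copy `M` in `G` meeting `X` also
meets `A`. -/
def IsLocalCoverFam {ι : Type*} {Vf : ι → Type*} (Z : ∀ i, SimpleGraph (Vf i))
    {W : Type*} (G : SimpleGraph W) (X A : Set W) : Prop :=
  A ⊆ X ∧
  ∀ (i : ι) (M : G.Subgraph), IsInflatedCopy (Z i) M →
    (M.verts ∩ X).Nonempty → (M.verts ∩ A).Nonempty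

/-!
The cover can be taken global, `X = V(G)`: it suffices to find a set `A` of at most
`(k - 1)(z + d)` vertices meeting every `Z`-inflated copy. Putting the dissolved vertices of
degree two back into the branch sets shows that every inflated copy contains a connected model of
a member of `Z`; conversely every connected model is the vertex set of an inflated copy, so `α t`
meets every connected model meeting `β t`. Now run the Erdős–Pósa argument along the tree
decomposition: choose a tree edge `tt'` and a connected model avoiding `β t ∩ β t'` inside the
bags on the side of `t'`, with that side minimal. By minimality every such model meets `β t'`,
hence `α t'`; so every model missing the at most `z + d` vertices of `(β t ∩ β t') ∪ α t'` avoids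
the side of `t'` altogether, and induction on `k` applies to those models. Infinite trees are
first cut down to a finite subtree whose bags still cover `G`.
-/

namespace SimpleGraph

variable {V W J : Type*} {G : SimpleGraph V}

lemma Preconnected.forall_of_adj (hG : G.Preconnected) {Q : V → Prop}
    (hQ : ∀ x y, G.Adj x y → Q x → Q y) (x y : V) (hx : Q x) : Q y := by
  obtain ⟨p⟩ := hG x y
  induction p with
  | nil => exact hx
  | cons h _ ih => exact ih (hQ _ _ h hx)

lemma Preconnected.induce_forall_of_adj {s : Set V} (hs : (G.induce s).Preconnected)
    {Q : V → Prop} (hQ : ∀ x ∈ s, ∀ y ∈ s, G.Adj x y → Q x → Q y)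
    {x y : V} (hx : x ∈ s) (hy : y ∈ s) (hQx : Q x) : Q y :=
  hs.forall_of_adj (Q := fun v => Q v) (fun a b h => hQ a a.2 b b.2 h) ⟨x, hx⟩ ⟨y, hy⟩ hQx

lemma induce_iUnion_connected {P : SimpleGraph J} (hP : P.Connected) {X : J → Set V}
    (hX : ∀ j, (G.induce (X j)).Connected)
    (hadj : ∀ j j', P.Adj j j' → ∃ x ∈ X j, ∃ y ∈ X j', G.Adj x y) :
    (G.induce (⋃ j, X j)).Connected := by
  have hmem {j x} (hx : x ∈ X j) : x ∈ ⋃ j, X j := Set.mem_iUnion_of_mem j hx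
  have hpiece : ∀ j x y (hx : x ∈ X j) (hy : y ∈ X j),
      (G.induce (⋃ j, X j)).Reachable ⟨x, hmem hx⟩ ⟨y, hmem hy⟩ := fun j x y hx hy =>
    ((hX j).preconnected ⟨x, hx⟩ ⟨y, hy⟩).map (G.induceHomOfLE (Set.subset_iUnion X j)).toHom
  obtain ⟨j₀⟩ := hP.nonempty
  obtain ⟨⟨x₀, hx₀⟩⟩ := (hX j₀).nonempty
  refine (connected_iff_exists_forall_reachable _).2 ⟨⟨x₀, hmem hx₀⟩, ?_⟩
  rintro ⟨y, hy⟩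
  obtain ⟨j, hyj⟩ := Set.mem_iUnion.1 hy
  refine hP.preconnected.forall_of_adj
    (Q := fun j => ∀ y (hy : y ∈ X j), (G.induce (⋃ j, X j)).Reachable ⟨x₀, hmem hx₀⟩ ⟨y, hmem hy⟩)
    ?_ j₀ j (fun y hy => hpiece j₀ x₀ y hx₀ hy) y hyj
  intro j j' hjj' hj y hy
  obtain ⟨a, ha, b, hb, hab⟩ := hadj j j' hjj'
  exact (hj a ha).trans (Adj.reachable (G := G.induce _) (u := ⟨a, hmem ha⟩) (v := ⟨b, hmem hb⟩) hab
    |>.trans (hpiece j' b y hb hy))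

end SimpleGraph

open Function

namespace IsMinorOf

variable {U V W : Type*} {H : SimpleGraph U} {G : SimpleGraph V} {G' : SimpleGraph W}

lemma map (f : G →g G') (hf : Function.Injective f) (h : IsMinorOf H G) : IsMinorOf H G' := by
  obtain ⟨X, hne, hdisj, hconn, hedge⟩ := h
  refine ⟨fun a => f '' X a, fun a => (hne a).image f,
    fun a b hab => (Set.disjoint_image_iff hf).2 (hdisj a b hab), fun a => ?_, fun a b hab => ?_⟩
  · refine (hconn a).map ⟨fun x : X a => ⟨f x, x, x.2, rfl⟩, fun h => f.map_adj h⟩ ?_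
    rintro ⟨_, x, hx, rfl⟩
    exact ⟨⟨x, hx⟩, rfl⟩
  · obtain ⟨x, hx, y, hy, hxy⟩ := hedge a b hab
    exact ⟨f x, ⟨x, hx, rfl⟩, f y, ⟨y, hy, rfl⟩, f.map_adj hxy⟩

/-- The union of the branch sets of a model of a connected graph is connected. -/
lemma exists_connected_induce (hH : H.Connected) (h : IsMinorOf H G) :
    ∃ S : Set V, (G.induce S).Connected ∧ IsMinorOf H (G.induce S) := by
  obtain ⟨X, hne, hdisj, hconn, hedge⟩ := h
  have hmem {a x} (hx : x ∈ X a) : x ∈ ⋃ a, X a := Set.mem_iUnion_of_mem a hx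
  refine ⟨⋃ a, X a, induce_iUnion_connected hH hconn hedge, fun a => Subtype.val ⁻¹' X a,
    fun a => ?_, fun a b hab => (hdisj a b hab).preimage _, fun a => ?_, fun a b hab => ?_⟩
  · obtain ⟨x, hx⟩ := hne a
    exact ⟨⟨x, hmem hx⟩, hx⟩
  · refine (hconn a).map ⟨fun x : X a => ⟨⟨x, hmem x.2⟩, x.2⟩, fun h => h⟩ ?_
    rintro ⟨⟨x, -⟩, hx⟩
    exact ⟨⟨x, hx⟩, rfl⟩
  · obtain ⟨x, hx, y, hy, hxy⟩ := hedge a b hab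
    exact ⟨⟨x, hmem hx⟩, hx, ⟨y, hmem hy⟩, hy, hxy⟩

lemma exists_connected_induce_subset_range (hH : H.Connected) (f : G →g G')
    (hf : Function.Injective f) (h : IsMinorOf H G) :
    ∃ S ⊆ Set.range f, (G'.induce S).Connected ∧ IsMinorOf H (G'.induce S) := by
  obtain ⟨S, hS, hm⟩ := h.exists_connected_induce hH
  let φ : G.induce S →g G'.induce (f '' S) :=
    ⟨fun x : S => ⟨f x, x, x.2, rfl⟩, fun h => f.map_adj h⟩
  have hφ : Function.Surjective φ := by
    rintro ⟨_, x, hx, rfl⟩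
    exact ⟨⟨x, hx⟩, rfl⟩
  exact ⟨f '' S, Set.image_subset_range f S, hS.map φ hφ,
    hm.map φ fun x y hxy => Subtype.ext (hf (congrArg Subtype.val hxy))⟩

end IsMinorOf

namespace SimpleGraph.Walk

variable {Ω : Type*} {Γ : SimpleGraph Ω} {T : Set Ω} {a b c d x : Ω}

def innerVerts (p : Γ.Walk a b) : Set Ω := {v | v ∈ p.support ∧ v ≠ a ∧ v ≠ b}

lemma innerVerts_reverse (p : Γ.Walk a b) : p.reverse.innerVerts = p.innerVerts := by
  ext v
  simp only [innerVerts, support_reverse, List.mem_reverse, Set.mem_ofPred_eq]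
  tauto

/-- The walks that `dissolve Γ T` turns into edges. -/
structure IsThread (T : Set Ω) (p : Γ.Walk a b) : Prop where
  left_mem : a ∈ T
  right_mem : b ∈ T
  isPath : p.IsPath
  inner_notMem : ∀ v ∈ p.innerVerts, v ∉ T

namespace IsThread

variable {p : Γ.Walk a b} {q : Γ.Walk c d}

lemma reverse (hp : p.IsThread T) : p.reverse.IsThread T :=
  ⟨hp.right_mem, hp.left_mem, hp.isPath.reverse, by
    rw [innerVerts_reverse]; exact hp.inner_notMem⟩

lemma eq_or_eq_of_mem (hp : p.IsThread T) {v : Ω} (hv : v ∈ p.support) (hvT : v ∈ T) :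
    v = a ∨ v = b := by
  by_contra! h
  exact hp.inner_notMem v ⟨hv, h⟩ hvT

lemma mem_innerVerts (hp : p.IsThread T) {v : Ω} (hv : v ∈ p.support) (hvT : v ∉ T) :
    v ∈ p.innerVerts :=
  ⟨hv, fun h => hvT (h ▸ hp.left_mem), fun h => hvT (h ▸ hp.right_mem)⟩

/-- An inner vertex has degree two, and both its neighbours are already on the thread. -/
lemma mem_support_of_adj (hdeg : ∀ v ∉ T, (Γ.neighborSet v).ncard = 2) (hp : p.IsThread T)
    {y : Ω} (hx : x ∈ p.innerVerts) (hxy : Γ.Adj x y) : y ∈ p.support := by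
  obtain ⟨i, rfl, hi⟩ := mem_support_iff_exists_getVert.1 hx.1
  have hi0 : i ≠ 0 := by rintro rfl; exact hx.2.1 (getVert_zero p)
  have hil : i < p.length := lt_of_le_of_ne hi (by rintro rfl; exact hx.2.2 p.getVert_length)
  have hdeg2 := hdeg _ (hp.inner_notMem _ hx)
  have hsub : p.toSubgraph.neighborSet (p.getVert i) = Γ.neighborSet (p.getVert i) :=
    Set.eq_of_subset_of_ncard_le (Subgraph.neighborSet_subset _ _)
      (by rw [hdeg2, hp.isPath.ncard_neighborSet_toSubgraph_internal_eq_two hi0 hil])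
      (Set.finite_of_ncard_ne_zero (by rw [hdeg2]; norm_num))
  have hadj : p.toSubgraph.Adj (p.getVert i) y := by
    rw [← Subgraph.mem_neighborSet, hsub]; exact hxy
  exact (mem_verts_toSubgraph p).1 (p.toSubgraph.edge_vert hadj.symm)

lemma mem_support_of_walk (hdeg : ∀ v ∉ T, (Γ.neighborSet v).ncard = 2) (hp : p.IsThread T)
    (hx : x ∈ p.innerVerts) (r : Γ.Walk x d) (hr : ∀ v ∈ r.support, v ∈ T → v = d) :
    d ∈ p.support := by
  induction r with
  | nil => exact hx.1
  | @cons u y e huy r ih =>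
    have hy : y ∈ p.support := hp.mem_support_of_adj hdeg hx huy
    by_cases hyT : y ∈ T
    · rwa [← hr y (by simp) hyT]
    · exact ih (hp.mem_innerVerts hy hyT) (fun v hv => hr v (by simp [hv]))

lemma left_mem_support (hdeg : ∀ v ∉ T, (Γ.neighborSet v).ncard = 2) (hp : p.IsThread T)
    (hq : q.IsThread T) (hx : x ∈ p.innerVerts ∩ q.innerVerts) : c ∈ p.support := by
  classical
  refine hp.mem_support_of_walk hdeg hx.1 (q.takeUntil x hx.2.1).reverse fun v hv hvT => ?_
  rw [support_reverse, List.mem_reverse] at hv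
  refine (hq.eq_or_eq_of_mem (q.support_takeUntil_subset_support hx.2.1 hv) hvT).resolve_right ?_
  rintro rfl
  exact endpoint_notMem_support_takeUntil hq.isPath hx.2.1 hx.2.2.2.symm hv

lemma pair_eq (hdeg : ∀ v ∉ T, (Γ.neighborSet v).ncard = 2) (hp : p.IsThread T)
    (hq : q.IsThread T) (hx : x ∈ p.innerVerts ∩ q.innerVerts) : ({a, b} : Set Ω) = {c, d} := by
  have hsub : ∀ {a b c d : Ω} {p : Γ.Walk a b} {q : Γ.Walk c d}, p.IsThread T → q.IsThread T →
      x ∈ p.innerVerts ∩ q.innerVerts → ({c, d} : Set Ω) ⊆ {a, b} := by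
    intro a b c d p q hp hq hx
    have hx' : x ∈ p.innerVerts ∩ q.reverse.innerVerts := by rwa [innerVerts_reverse]
    rintro v (rfl | rfl)
    · exact hp.eq_or_eq_of_mem (hp.left_mem_support hdeg hq hx) hq.left_mem
    · exact hp.eq_or_eq_of_mem (hp.left_mem_support hdeg hq.reverse hx') hq.right_mem
  exact (hsub hq hp ⟨hx.2, hx.1⟩).antisymm (hsub hp hq hx)

end IsThread

end SimpleGraph.Walk

section Dissolve

variable {V Ω : Type*} {H : SimpleGraph V} {Γ : SimpleGraph Ω} {T : Set Ω}

lemma exists_isThread_of_dissolve_adj {a b : T} (h : (dissolve Γ T).Adj a b) :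
    ∃ p : Γ.Walk a b, p.IsThread T := by
  classical
  have key : ∀ {x y : T}, (∃ p : Γ.Walk x y, ∀ v ∈ p.support, v ≠ x → v ≠ y → v ∉ T) →
      ∃ p : Γ.Walk x y, p.IsThread T := by
    rintro x y ⟨q, hq⟩
    exact ⟨q.toPath, x.2, y.2, q.toPath.2,
      fun v hv => hq v (q.support_toPath_subset_support hv.1) hv.2.1 hv.2.2⟩
  rw [dissolve, fromRel_adj] at h
  rcases h.2 with h | ⟨q, hq⟩
  · exact key h
  · obtain ⟨p, hp⟩ := key ⟨q, hq⟩
    exact ⟨p.reverse, hp.reverse⟩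

variable [LinearOrder Ω] (pth : ∀ a b : T, (dissolve Γ T).Adj a b → Γ.Walk a b)

/-- The inner vertices of each chosen thread go to its smaller end, which makes the pieces of
distinct vertices of `T` disjoint. -/
def threadPiece (a : T) : Set Ω :=
  insert (a : Ω) (⋃ (b : T) (h : (dissolve Γ T).Adj a b) (_ : (a : Ω) < b), (pth a b h).innerVerts)

lemma mem_threadPiece_self (a : T) : (a : Ω) ∈ threadPiece pth a := Set.mem_insert _ _

lemma innerVerts_subset_threadPiece {a b : T} (h : (dissolve Γ T).Adj a b) (hab : (a : Ω) < b) :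
    (pth a b h).innerVerts ⊆ threadPiece pth a := fun _ hv =>
  Set.mem_insert_of_mem _ (Set.mem_iUnion₂.2 ⟨b, h, Set.mem_iUnion.2 ⟨hab, hv⟩⟩)

lemma mem_threadPiece_iff {a : T} {x : Ω} : x ∈ threadPiece pth a ↔
    x = a ∨ ∃ (b : T) (h : (dissolve Γ T).Adj a b), (a : Ω) < b ∧ x ∈ (pth a b h).innerVerts := by
  simp only [threadPiece, Set.mem_insert_iff, Set.mem_iUnion, exists_prop]

variable {pth}

lemma connected_induce_threadPiece (hpth : ∀ a b h, (pth a b h).IsThread T) (a : T) :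
    (Γ.induce (threadPiece pth a)).Connected := by
  classical
  refine (connected_iff_exists_forall_reachable _).2 ⟨⟨a, mem_threadPiece_self pth a⟩, ?_⟩
  rintro ⟨v, hv⟩
  obtain rfl | ⟨b, h, hab, hv⟩ := (mem_threadPiece_iff pth).1 hv
  · rfl
  set q := (pth a b h).takeUntil v hv.1
  have hq : ∀ x ∈ q.support, x ∈ threadPiece pth a := by
    intro x hx
    by_cases hxa : x = a
    · exact hxa ▸ mem_threadPiece_self pth a
    refine innerVerts_subset_threadPiece pth h hab
      ⟨(pth a b h).support_takeUntil_subset_support hv.1 hx, hxa, ?_⟩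
    rintro rfl
    exact Walk.endpoint_notMem_support_takeUntil (hpth a b h).isPath hv.1 hv.2.2.symm hx
  exact ⟨q.induce _ hq⟩

lemma disjoint_threadPiece (hdeg : ∀ v ∉ T, (Γ.neighborSet v).ncard = 2)
    (hpth : ∀ a b h, (pth a b h).IsThread T) {a c : T} (hac : a ≠ c) :
    Disjoint (threadPiece pth a) (threadPiece pth c) := by
  rw [Set.disjoint_left]
  intro x hxa hxc
  rcases (mem_threadPiece_iff pth).1 hxa with rfl | ⟨b, h, hab, hxb⟩ <;>
    rcases (mem_threadPiece_iff pth).1 hxc with hxc | ⟨d, h', hcd, hxd⟩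
  · exact hac (Subtype.ext hxc)
  · exact (hpth c d h').inner_notMem _ hxd a.2
  · exact (hpth a b h).inner_notMem _ hxb (hxc ▸ c.2)
  · rcases Set.pair_eq_pair_iff.1 ((hpth a b h).pair_eq hdeg (hpth c d h') ⟨hxb, hxd⟩) with
      ⟨hac', -⟩ | ⟨had, hbc⟩
    · exact hac (Subtype.ext hac')
    · exact lt_irrefl (a : Ω) (calc (a : Ω) < b := hab
        _ = c := hbc
        _ < d := hcd
        _ = a := had.symm)

lemma exists_adj_threadPiece {a b : T} (h : (dissolve Γ T).Adj a b) :
    ∃ x ∈ threadPiece pth a, ∃ y ∈ threadPiece pth b, Γ.Adj x y := by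
  wlog hab : (a : Ω) < b generalizing a b
  · obtain ⟨y, hy, x, hx, hyx⟩ :=
      this h.symm (lt_of_le_of_ne (not_lt.1 hab) fun e => h.ne (Subtype.ext e.symm))
    exact ⟨x, hx, y, hy, hyx.symm⟩
  set p := pth a b h
  have hnil : ¬ p.Nil := Walk.not_nil_of_ne fun e => h.ne (Subtype.ext e)
  refine ⟨p.penultimate, ?_, b, mem_threadPiece_self pth b, p.adj_penultimate hnil⟩
  by_cases hpa : p.penultimate = a
  · rw [hpa]; exact mem_threadPiece_self pth a
  · exact innerVerts_subset_threadPiece pth h hab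
      ⟨p.getVert_mem_support _, hpa, (p.adj_penultimate hnil).ne⟩

end Dissolve

lemma IsMinorOf.of_dissolve {V Ω : Type*} {H : SimpleGraph V} {Γ : SimpleGraph Ω} {T : Set Ω}
    (hdeg : ∀ v ∉ T, (Γ.neighborSet v).ncard = 2) (h : IsMinorOf H (dissolve Γ T)) :
    IsMinorOf H Γ := by
  classical
  let _ : LinearOrder Ω := linearOrderOfSTO WellOrderingRel
  choose pth hpth using fun a b (h : (dissolve Γ T).Adj a b) => exists_isThread_of_dissolve_adj h
  obtain ⟨X, hne, hdisj, hconn, hedge⟩ := h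
  refine ⟨fun u => ⋃ a : X u, threadPiece pth a, fun u => ?_, fun u w huw => ?_,
    fun u => ?_, fun u w huw => ?_⟩
  · obtain ⟨a, ha⟩ := hne u
    exact ⟨a, Set.mem_iUnion.2 ⟨⟨a, ha⟩, mem_threadPiece_self pth a⟩⟩
  · simp only [Set.disjoint_iUnion_left, Set.disjoint_iUnion_right]
    exact fun c a => disjoint_threadPiece hdeg hpth
      fun e => Set.disjoint_left.1 (hdisj u w huw) a.2 (by rw [e]; exact c.2)
  · exact induce_iUnion_connected (hconn u) (fun a => connected_induce_threadPiece hpth a)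
      fun a c hac => exists_adj_threadPiece hac
  · obtain ⟨a, ha, b, hb, hab⟩ := hedge u w huw
    obtain ⟨x, hx, y, hy, hxy⟩ := exists_adj_threadPiece hab
    exact ⟨x, Set.mem_iUnion.2 ⟨⟨a, ha⟩, hx⟩, y, Set.mem_iUnion.2 ⟨⟨b, hb⟩, hy⟩, hxy⟩

section InflatedCopy

variable {V W : Type*} {H : SimpleGraph V} {G : SimpleGraph W}

lemma dissolve_adj_of_adj {T : Set W} {a b : T} (h : G.Adj a b) : (dissolve G T).Adj a b := by
  rw [dissolve, fromRel_adj]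
  refine ⟨fun hab => h.ne (congrArg Subtype.val hab), Or.inl ⟨h.toWalk, fun v hv hva hvb => ?_⟩⟩
  simp only [Adj.toWalk, Walk.support_cons, Walk.support_nil, List.mem_cons,
    List.not_mem_nil, or_false] at hv
  tauto

lemma IsExpansion.isMinorOf_coe {M : G.Subgraph} {T : Set W} (h : IsExpansion H M T) :
    IsMinorOf H M.coe :=
  h.2.2.of_dissolve fun v hv => by
    rw [Set.ncard_congr' (Subgraph.coeNeighborSetEquiv v)]
    exact h.2.1 v v.2 hv

lemma exists_isInflatedCopy_verts_eq [Finite W] {S : Set W} (h : IsMinorOf H (G.induce S)) :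
    ∃ M : G.Subgraph, IsInflatedCopy H M ∧ M.verts = S := by
  set K := (⊤ : G.Subgraph).induce S
  have hK : IsExpansion H K S := by
    refine ⟨subset_rfl, fun v hv hvS => absurd hv hvS, h.map
      ⟨fun x : S => ⟨⟨x, x.2⟩, x.2⟩, fun {x y} hxy => dissolve_adj_of_adj ?_⟩ ?_⟩
    · exact ⟨x.2, y.2, hxy⟩
    · intro x y hxy
      exact Subtype.ext (congrArg (Subtype.val ∘ Subtype.val) hxy)
  obtain ⟨M, ⟨hMK, hM⟩, hmin⟩ := (Finite.to_wellFoundedLT (α := G.Subgraph)).wf.has_min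
    {M | M ≤ K ∧ IsExpansion H M S} ⟨K, le_rfl, hK⟩
  refine ⟨M, ⟨S, hM, fun M' hM' hexp => ?_⟩, (Subgraph.verts_mono hMK).antisymm hM.1⟩
  by_contra hne
  exact hmin M' ⟨hM'.trans hMK, hexp⟩ (lt_of_le_of_ne hM' hne)

lemma IsInflatedCopy.exists_connected_minor (hH : H.Connected) {M : G.Subgraph}
    (hM : IsInflatedCopy H M) :
    ∃ S ⊆ M.verts, (G.induce S).Connected ∧ IsMinorOf H (G.induce S) := by
  obtain ⟨T, hexp, -⟩ := hM
  obtain ⟨S, hSM, hS⟩ := hexp.isMinorOf_coe.exists_connected_induce_subset_range hH M.hom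
    Subgraph.hom_injective
  exact ⟨S, hSM.trans Subtype.range_coe.subset, hS⟩

lemma isLocalCoverFam_univ {ι : Type*} {Vf : ι → Type*} {Z : ∀ i, SimpleGraph (Vf i)}
    (hZ : ∀ i, (Z i).Connected) {A : Set W}
    (hA : ∀ S, (G.induce S).Connected → ∀ i, IsMinorOf (Z i) (G.induce S) → (S ∩ A).Nonempty) :
    IsLocalCoverFam Z G Set.univ A := by
  refine ⟨Set.subset_univ A, fun i M hM _ => ?_⟩
  obtain ⟨S, hSM, hS, hm⟩ := hM.exists_connected_minor (hZ i)
  obtain ⟨x, hxS, hxA⟩ := hA S hS i hm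
  exact ⟨x, hSM hxS, hxA⟩

end InflatedCopy

namespace SimpleGraph.IsTree

variable {σ : Type*} {Tr : SimpleGraph σ} (hT : Tr.IsTree) {s t t' t'' u x y : σ}

noncomputable def path (s t : σ) : Tr.Walk s t := (hT.existsUnique_path s t).choose

lemma isPath_path (s t : σ) : (hT.path s t).IsPath := (hT.existsUnique_path s t).choose_spec.1

lemma eq_path {p : Tr.Walk s t} (hp : p.IsPath) : p = hT.path s t :=
  (hT.existsUnique_path s t).choose_spec.2 p hp

lemma support_path_subset {U : Set σ} (hU : (Tr.induce U).Preconnected) (hs : s ∈ U)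
    (ht : t ∈ U) : ∀ x ∈ (hT.path s t).support, x ∈ U := by
  classical
  obtain ⟨q⟩ := hU ⟨s, hs⟩ ⟨t, ht⟩
  have hq : ∀ x ∈ (q.map (Embedding.induce U).toHom).support, x ∈ U := by
    simp only [Walk.support_map, List.mem_map]
    rintro _ ⟨y, -, rfl⟩
    exact y.2
  intro x hx
  rw [← hT.eq_path (s := s) (t := t) (q.map (Embedding.induce U).toHom).bypass_isPath] at hx
  exact hq x (Walk.support_bypass_subset_support _ hx)

/-- Equal to `t` when `s = t`. -/
noncomputable def next (t s : σ) : σ := (hT.path t s).snd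

lemma adj_next (h : t ≠ s) : Tr.Adj t (hT.next t s) := Walk.adj_snd (Walk.not_nil_of_ne h)

lemma next_eq_of_isPath (h : Tr.Adj t u) {q : Tr.Walk u s} (hq : (Walk.cons h q).IsPath) :
    hT.next t s = u := by
  rw [next, ← hT.eq_path hq, Walk.snd_cons]

lemma next_of_adj (h : Tr.Adj t u) : hT.next t u = u :=
  hT.next_eq_of_isPath h (q := .nil) (by simp [h.ne])

lemma next_ne_of_isPath {p : Tr.Walk t s} (hp : p.IsPath) (hu : u ∉ p.support) :
    hT.next t s ≠ u := by
  rw [next, ← hT.eq_path hp]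
  exact fun h => hu (h ▸ p.getVert_mem_support 1)

lemma next_eq_next_of_adj (hxy : Tr.Adj x y) (hx : x ≠ t) (hy : y ≠ t) :
    hT.next t x = hT.next t y := by
  classical
  set p := hT.path t x
  have hnil : ¬ p.Nil := Walk.not_nil_of_ne hx.symm
  have hp : p.IsPath := hT.isPath_path t x
  rw [← p.cons_tail_eq hnil, Walk.cons_isPath_iff] at hp
  symm
  by_cases hy' : y ∈ p.tail.support
  · exact hT.next_eq_of_isPath (p.adj_snd hnil) (Walk.cons_isPath_iff _ _ |>.2 ⟨hp.1.takeUntil hy',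
      fun h => hp.2 (p.tail.support_takeUntil_subset_support hy' h)⟩)
  · have hq : (Walk.cons (p.adj_snd hnil) (p.tail.concat hxy)).IsPath := by
      rw [Walk.cons_isPath_iff, Walk.support_concat, List.mem_append,
        List.mem_singleton, not_or]
      exact ⟨hp.1.concat hy' hxy, hp.2, hy.symm⟩
    exact hT.next_eq_of_isPath _ hq

lemma next_eq_of_preconnected {U : Set σ} (hU : (Tr.induce U).Preconnected) (ht : t ∉ U)
    (hx : x ∈ U) (hy : y ∈ U) : hT.next t x = hT.next t y :=
  hU.induce_forall_of_adj (Q := fun s => hT.next t x = hT.next t s)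
    (fun _ ha _ hb hab h => h.trans (hT.next_eq_next_of_adj hab (ne_of_mem_of_not_mem ha ht)
      (ne_of_mem_of_not_mem hb ht))) hx hy rfl

lemma exists_isPath_of_mem_support (h : t ≠ t') (hs : t ∈ (hT.path t' s).support) :
    ∃ r : Tr.Walk t s, r.IsPath ∧ t' ∉ r.support := by
  classical
  have hs' : t ∈ (hT.path t' s).reverse.support := by simpa using hs
  refine ⟨((hT.path t' s).reverse.takeUntil t hs').reverse,
    ((hT.isPath_path t' s).reverse.takeUntil hs').reverse, ?_⟩
  rw [Walk.support_reverse, List.mem_reverse]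
  exact Walk.endpoint_notMem_support_takeUntil (hT.isPath_path t' s).reverse hs' h.symm

/-- For an edge `tt'`, the component of `t'` in the tree minus `t`. -/
def side (t t' : σ) : Set σ := {s | s ≠ t ∧ hT.next t s = t'}

lemma mem_side_of_adj (h : Tr.Adj t t') : t' ∈ hT.side t t' := ⟨h.ne', hT.next_of_adj h⟩

lemma notMem_side_left : t ∉ hT.side t t' := fun h => h.1 rfl

lemma notMem_side_of_mem_side (hs : s ∈ hT.side t t') : s ∉ hT.side t' t := by
  rintro ⟨hst', hnext⟩
  have ht : t ∈ (hT.path t' s).support := hnext ▸ Walk.getVert_mem_support _ 1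
  have htt' : t ≠ t' := by rintro rfl; exact (hT.adj_next hs.1.symm).ne hs.2.symm
  obtain ⟨r, hr, ht'r⟩ := hT.exists_isPath_of_mem_support htt' ht
  exact hT.next_ne_of_isPath hr ht'r hs.2

lemma mem_side_or_mem_side (h : Tr.Adj t t') (s : σ) : s ∈ hT.side t t' ∨ s ∈ hT.side t' t := by
  obtain rfl | hst := eq_or_ne s t
  · exact Or.inr (hT.mem_side_of_adj h.symm)
  obtain rfl | hst' := eq_or_ne s t'
  · exact Or.inl (hT.mem_side_of_adj h)
  by_cases ht : t ∈ (hT.path t' s).support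
  · obtain ⟨r, hr, ht'r⟩ := hT.exists_isPath_of_mem_support h.ne ht
    exact Or.inr ⟨hst', hT.next_eq_of_isPath h.symm (Walk.cons_isPath_iff _ _ |>.2 ⟨hr, ht'r⟩)⟩
  · refine Or.inl ⟨hst, ?_⟩
    rw [← hT.next_eq_of_preconnected (hT.path t' s).connected_induce_support.preconnected ht
      (hT.path t' s).start_mem_support (hT.path t' s).end_mem_support, hT.next_of_adj h]

lemma side_subset_side (h : Tr.Adj t t') (ht'' : t'' ≠ t) :
    hT.side t' t'' ⊆ hT.side t t' := by
  intro s hs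
  refine (hT.mem_side_or_mem_side h s).resolve_right fun hs' => ht'' ?_
  rw [← hs.2, hs'.2]

lemma eq_of_adj_of_mem_side (h : Tr.Adj t t') (hxy : Tr.Adj x y) (hx : x ∈ hT.side t t')
    (hy : y ∈ hT.side t' t) : x = t' ∧ y = t := by
  by_cases hyt : y = t
  · subst hyt
    exact ⟨(hT.next_of_adj hxy.symm).symm.trans hx.2, rfl⟩
  · exact (hT.notMem_side_of_mem_side ⟨hyt, (hT.next_eq_next_of_adj hxy hx.1 hyt).symm.trans hx.2⟩
      hy).elim

end SimpleGraph.IsTree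

namespace TreeDecomp

variable {W σ : Type*} {G : SimpleGraph W} (D : TreeDecomp G σ) {S : Set W} {t t' : σ}

def part (t t' : σ) : Set W := {v | ∃ s ∈ D.isTree.side t t', v ∈ D.bag s}

def IsBeyond (S : Set W) (t t' : σ) : Prop :=
  D.tree.Adj t t' ∧ S ⊆ D.part t t' ∧ Disjoint S (D.bag t ∩ D.bag t')

lemma mem_part_of_adj (htt' : D.tree.Adj t t') {v w : W} (hvw : G.Adj v w)
    (hv : v ∈ D.part t t') (hvt : v ∉ D.bag t ∩ D.bag t') : w ∈ D.part t t' := by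
  obtain ⟨s₁, hs₁, hvs₁⟩ := hv
  obtain ⟨s, hvs, hws⟩ := D.bag_edge hvw
  refine ⟨s, (D.bag_conn v).preconnected.induce_forall_of_adj
    (Q := (· ∈ D.isTree.side t t')) (fun x hx y hy hxy hxside => ?_) hvs₁ hvs hs₁, hws⟩
  refine (D.isTree.mem_side_or_mem_side htt' y).resolve_right fun hyside => hvt ?_
  obtain ⟨rfl, rfl⟩ := D.isTree.eq_of_adj_of_mem_side htt' hxy hxside hyside
  exact ⟨hy, hx⟩

lemma subset_part (htt' : D.tree.Adj t t') (hS : (G.induce S).Preconnected)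
    (hSt : Disjoint S (D.bag t ∩ D.bag t')) (hmeet : (S ∩ D.part t t').Nonempty) :
    S ⊆ D.part t t' := by
  obtain ⟨x, hxS, hx⟩ := hmeet
  exact fun y hy => hS.induce_forall_of_adj
    (fun a ha _ _ hab h => D.mem_part_of_adj htt' hab h (Set.disjoint_left.1 hSt ha)) hxS hy hx

lemma exists_side_of_disjoint_bag (hS : (G.induce S).Connected) (hSt : Disjoint S (D.bag t)) :
    ∃ t', D.tree.Adj t t' ∧ ∀ v ∈ S, ∀ s, v ∈ D.bag s → s ∈ D.isTree.side t t' := by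
  obtain ⟨⟨v₀, hv₀⟩⟩ := hS.nonempty
  obtain ⟨s₀, hs₀⟩ := D.bag_vert v₀
  have hnext : ∀ {v}, v ∈ S → ∀ {s s'}, v ∈ D.bag s → v ∈ D.bag s' →
      D.isTree.next t s = D.isTree.next t s' := fun hv _ _ hs hs' =>
    D.isTree.next_eq_of_preconnected (D.bag_conn _).preconnected
      (Set.disjoint_left.1 hSt hv) hs hs'
  refine ⟨D.isTree.next t s₀, D.isTree.adj_next fun h => Set.disjoint_left.1 hSt hv₀ (h ▸ hs₀),
    fun v hv s hs => ⟨fun h => Set.disjoint_left.1 hSt hv (h ▸ hs), ?_⟩⟩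
  refine hS.preconnected.induce_forall_of_adj
    (Q := fun v => ∀ s, v ∈ D.bag s → D.isTree.next t s = D.isTree.next t s₀)
    (fun x hx y hy hxy h s hs => ?_) hv₀ hv (fun s hs => hnext hv₀ hs hs₀) s hs
  obtain ⟨sc, hxsc, hysc⟩ := D.bag_edge hxy
  exact (hnext hy hs hysc).trans (h sc hxsc)

section Finite

variable [Finite σ] {z d : ℕ} {α : σ → Set W} {P : Set W → Prop}

lemma meets_bag_of_isBeyond (hS : (G.induce S).Connected) (hSe : D.IsBeyond S t t')
    (hmin : ∀ t'', D.IsBeyond S t' t'' →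
      (D.isTree.side t t').ncard ≤ (D.isTree.side t' t'').ncard) :
    (S ∩ D.bag t').Nonempty := by
  by_contra hSt'
  rw [Set.not_nonempty_iff_eq_empty, ← Set.disjoint_iff_inter_eq_empty] at hSt'
  obtain ⟨t'', ht'', hside⟩ := D.exists_side_of_disjoint_bag hS hSt'
  have ht''t : t'' ≠ t := by
    rintro rfl
    obtain ⟨⟨v, hv⟩⟩ := hS.nonempty
    obtain ⟨s, hs, hvs⟩ := hSe.2.1 hv
    exact D.isTree.notMem_side_of_mem_side hs (hside v hv s hvs)
  have hbeyond : D.IsBeyond S t' t'' := ⟨ht'', fun v hv =>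
    let ⟨s, hs⟩ := D.bag_vert v; ⟨s, hside v hv s hs, hs⟩, hSt'.mono_right Set.inter_subset_left⟩
  refine (hmin t'' hbeyond).not_gt (Set.ncard_lt_ncard ⟨D.isTree.side_subset_side hSe.1 ht''t,
    fun hsub => D.isTree.notMem_side_left (hsub (D.isTree.mem_side_of_adj hSe.1))⟩
    (Set.toFinite _))

/-- `B` is the adhesion set of an edge `tt'` with a member of `P` beyond it and the side of `t'`
minimal, together with `α t'`. -/
lemma exists_separating_set (hadh : ∀ t t', D.tree.Adj t t' → (D.bag t ∩ D.bag t').ncard ≤ z)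
    (hα : ∀ t, (α t).ncard ≤ d) (hP : ∀ S, P S → (G.induce S).Connected)
    (hhit : ∀ t S, P S → (S ∩ D.bag t).Nonempty → (S ∩ α t).Nonempty) (hex : ∃ S, P S) :
    ∃ S₀ V₀ B : Set W, P S₀ ∧ S₀ ⊆ V₀ ∧ B.ncard ≤ z + d ∧
      ∀ S, P S → Disjoint S B → Disjoint S V₀ := by
  by_cases hC : ∃ S t t', P S ∧ D.IsBeyond S t t'
  · obtain ⟨⟨t, t'⟩, ⟨S₀, hS₀, hbeyond⟩, hmin⟩ := Set.exists_min_image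
      {e : σ × σ | ∃ S, P S ∧ D.IsBeyond S e.1 e.2} (fun e => (D.isTree.side e.1 e.2).ncard)
      (Set.toFinite _) (let ⟨S, t, t', h⟩ := hC; ⟨(t, t'), S, h⟩)
    refine ⟨S₀, D.part t t', (D.bag t ∩ D.bag t') ∪ α t', hS₀, hbeyond.2.1,
      (Set.ncard_union_le _ _).trans (add_le_add (hadh t t' hbeyond.1) (hα t')),
      fun S hS hSB => Set.disjoint_iff_inter_eq_empty.2 ?_⟩
    by_contra hmeet
    have hSadh : Disjoint S (D.bag t ∩ D.bag t') := hSB.mono_right Set.subset_union_left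
    have hSe : D.IsBeyond S t t' := ⟨hbeyond.1, D.subset_part hbeyond.1 (hP S hS).preconnected
      hSadh (Set.nonempty_iff_ne_empty.2 hmeet), hSadh⟩
    obtain ⟨x, hxS, hxα⟩ := hhit t' S hS
      (D.meets_bag_of_isBeyond (hP S hS) hSe fun t'' h => hmin (t', t'') ⟨S, hS, h⟩)
    exact Set.disjoint_left.1 hSB hxS (Or.inr hxα)
  · push Not at hC
    obtain ⟨t₀⟩ := D.isTree.connected.nonempty
    obtain ⟨S₀, hS₀⟩ := hex
    refine ⟨S₀, Set.univ, α t₀, hS₀, Set.subset_univ _, (hα t₀).trans (Nat.le_add_left d z),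
      fun S hS hSα => ?_⟩
    suffices (S ∩ D.bag t₀).Nonempty by
      obtain ⟨x, hxS, hxα⟩ := hhit t₀ S hS this
      exact (Set.disjoint_left.1 hSα hxS hxα).elim
    by_contra hSt
    rw [Set.not_nonempty_iff_eq_empty, ← Set.disjoint_iff_inter_eq_empty] at hSt
    obtain ⟨t', ht', hside⟩ := D.exists_side_of_disjoint_bag (hP S hS) hSt
    exact hC S t₀ t' hS ⟨ht', fun v hv => let ⟨s, hs⟩ := D.bag_vert v; ⟨s, hside v hv s hs, hs⟩,
      hSt.mono_right Set.inter_subset_left⟩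

theorem exists_disjoint_or_exists_hitting
    (hadh : ∀ t t', D.tree.Adj t t' → (D.bag t ∩ D.bag t').ncard ≤ z)
    (hα : ∀ t, (α t).ncard ≤ d) (hP : ∀ S, P S → (G.induce S).Connected)
    (hhit : ∀ t S, P S → (S ∩ D.bag t).Nonempty → (S ∩ α t).Nonempty) (k : ℕ) :
    (∃ f : Fin (k + 1) → Set W, (∀ a, P (f a)) ∧ Pairwise (Disjoint on f)) ∨
      ∃ A : Set W, A.ncard ≤ k * (z + d) ∧ ∀ S, P S → (S ∩ A).Nonempty := by
  induction k generalizing P with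
  | zero =>
    by_cases hex : ∃ S, P S
    · obtain ⟨S, hS⟩ := hex
      exact Or.inl ⟨fun _ => S, fun _ => hS,
        fun a b hab => (hab (Subsingleton.elim (α := Fin 1) a b)).elim⟩
    · push Not at hex
      exact Or.inr ⟨∅, by simp, fun S hS => (hex S hS).elim⟩
  | succ k ih =>
    by_cases hex : ∃ S, P S
    swap
    · push Not at hex
      exact Or.inr ⟨∅, by simp, fun S hS => (hex S hS).elim⟩
    obtain ⟨S₀, V₀, B, hS₀, hS₀V₀, hB, hsep⟩ := D.exists_separating_set hadh hα hP hhit hex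
    rcases ih (P := fun S => P S ∧ Disjoint S V₀) (fun S hS => hP S hS.1)
      (fun t S hS => hhit t S hS.1) with ⟨f, hf, hdisj⟩ | ⟨A, hA, hhitA⟩
    · have hS₀f : ∀ a, Disjoint S₀ (f a) := fun a => ((hf a).2.mono_right hS₀V₀).symm
      refine Or.inl ⟨Fin.cons S₀ f, Fin.cases hS₀ fun a => (hf a).1, fun a b hab => ?_⟩
      induction a using Fin.cases with
      | zero => induction b using Fin.cases with
        | zero => exact (hab rfl).elim
        | succ j => simpa [onFun] using hS₀f j
      | succ i => induction b using Fin.cases with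
        | zero => simpa [onFun] using (hS₀f i).symm
        | succ j => simpa [onFun] using hdisj fun h => hab (congrArg Fin.succ h)
    · refine Or.inr ⟨A ∪ B, (Set.ncard_union_le _ _).trans (by rw [Nat.succ_mul]; omega),
        fun S hS => ?_⟩
      by_cases hSB : Disjoint S B
      · obtain ⟨x, hxS, hxA⟩ := hhitA S ⟨hS, hsep S hS hSB⟩
        exact ⟨x, hxS, Or.inl hxA⟩
      · obtain ⟨x, hxS, hxB⟩ := Set.not_disjoint_iff.1 hSB
        exact ⟨x, hxS, Or.inr hxB⟩

end Finite

def restrict (U : Set σ) (hU : (D.tree.induce U).Connected)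
    (hvert : ∀ v, ∃ t ∈ U, v ∈ D.bag t)
    (hedge : ∀ ⦃v w⦄, G.Adj v w → ∃ t ∈ U, v ∈ D.bag t ∧ w ∈ D.bag t) : TreeDecomp G U where
  tree := D.tree.induce U
  isTree := ⟨hU, D.isTree.isAcyclic.induce U⟩
  bag t := D.bag t
  bag_vert v := let ⟨t, htU, hv⟩ := hvert v; ⟨⟨t, htU⟩, hv⟩
  bag_edge _ _ h := let ⟨t, htU, hv, hw⟩ := hedge h; ⟨⟨t, htU⟩, hv, hw⟩
  bag_conn v := by
    obtain ⟨t, htU, hvt⟩ := hvert v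
    have : Nonempty {s : U | v ∈ D.bag s} := ⟨⟨⟨t, htU⟩, hvt⟩⟩
    refine ⟨fun ⟨⟨x, hxU⟩, hx⟩ ⟨⟨y, hyU⟩, hy⟩ => ?_⟩
    have hsub := D.isTree.support_path_subset (D.bag_conn v).preconnected hx hy
    exact ⟨((D.isTree.path x y).induce U
      (D.isTree.support_path_subset hU.preconnected hxU hyU)).induce _ fun s hs => by
        simp only [Walk.support_induce, List.mem_attachWith] at hs
        exact hsub s hs⟩

lemma exists_finite_subtree [Finite W] : ∃ U : Set σ, U.Finite ∧ (D.tree.induce U).Connected ∧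
    (∀ v, ∃ t ∈ U, v ∈ D.bag t) ∧ ∀ ⦃v w⦄, G.Adj v w → ∃ t ∈ U, v ∈ D.bag t ∧ w ∈ D.bag t := by
  choose tv htv using D.bag_vert
  choose te hte using fun e : {p : W × W // G.Adj p.1 p.2} => D.bag_edge e.2
  obtain ⟨t₀⟩ := D.isTree.connected.nonempty
  set F : Set σ := insert t₀ (Set.range tv ∪ Set.range te)
  set U : Set σ := ⋃ f ∈ F, {s | s ∈ (D.isTree.path t₀ f).support}
  have hFU : F ⊆ U := fun f hf => Set.mem_biUnion hf (Walk.end_mem_support _)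
  refine ⟨U, (Set.toFinite F).biUnion fun f _ => List.finite_toSet _, ?_,
    fun v => ⟨tv v, hFU (by simp [F]), htv v⟩,
    fun v w h => ⟨te ⟨(v, w), h⟩, hFU (by simp [F]), hte ⟨(v, w), h⟩⟩⟩
  refine induce_connected_of_patches t₀ (hFU (Set.mem_insert _ _)) fun {s} hs => ?_
  obtain ⟨f, hf, hsf⟩ := Set.mem_iUnion₂.1 hs
  exact ⟨_, Set.subset_biUnion_of_mem (u := fun f => {s | s ∈ (D.isTree.path t₀ f).support}) hf,
    Walk.start_mem_support _, hsf, (D.isTree.path t₀ f).connected_induce_support.preconnected _ _⟩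

end TreeDecomp

theorem stmt_12_general {ι : Type*} {Vf : ι → Type*}
    (Z : ∀ i, SimpleGraph (Vf i))
    (hconn : ∀ i, (Z i).Connected)
    {W : Type*} {τ : Type*} [Fintype W] (G : SimpleGraph W)
    (k : ℕ) (z d : ℕ)
    (D : TreeDecomp G τ)
    (hadh : ∀ t t' : τ, D.tree.Adj t t' → (D.bag t ∩ D.bag t').ncard ≤ z)
    (α : τ → Set W)
    (hα : ∀ t : τ, (α t).ncard ≤ d ∧ IsLocalCoverFam Z G (D.bag t) (α t)) :
    (∃ M : Fin k → G.Subgraph,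
      (∀ a b, a ≠ b → Disjoint (M a).verts (M b).verts) ∧
      ∀ a, ∃ i, IsMinorOf (Z i) ((M a).coe)) ∨
    (∃ X A : Set W, IsLocalCoverFam Z G X A ∧
      (∀ i, ¬ IsMinorOf (Z i) (G.induce Xᶜ)) ∧
      A.ncard ≤ (k - 1) * (z + d) ∧
      ∀ C : (G.induce Xᶜ).ConnectedComponent,
        ({w : W | w ∉ Subtype.val '' C.supp ∧
            ∃ v ∈ Subtype.val '' C.supp, G.Adj v w}).ncard ≤ z) := by
  set P : Set W → Prop := fun S => (G.induce S).Connected ∧ ∃ i, IsMinorOf (Z i) (G.induce S)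
  have hhit : ∀ t S, P S → (S ∩ D.bag t).Nonempty → (S ∩ α t).Nonempty := by
    rintro t S ⟨-, i, hm⟩ hmeet
    obtain ⟨M, hM, rfl⟩ := exists_isInflatedCopy_verts_eq hm
    exact (hα t).2.2 i M hM hmeet
  obtain ⟨U, hUfin, hU, hvert, hedge⟩ := D.exists_finite_subtree
  have : Finite U := hUfin.to_subtype
  obtain _ | k := k
  · exact Or.inl ⟨Fin.elim0, fun a => a.elim0, fun a => a.elim0⟩
  rcases (D.restrict U hU hvert hedge).exists_disjoint_or_exists_hitting
    (fun s s' h => hadh s s' h) (fun s => (hα s).1) (fun S hS => hS.1) (fun s => hhit s) k with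
    ⟨f, hf, hdisj⟩ | ⟨A, hA, hhitA⟩
  · refine Or.inl ⟨fun a => (⊤ : G.Subgraph).induce (f a), hdisj, fun a => ?_⟩
    obtain ⟨-, i, hm⟩ := hf a
    exact ⟨i, induce_eq_coe_induce_top (f a) ▸ hm⟩
  refine Or.inr ⟨Set.univ, A, isLocalCoverFam_univ hconn fun S hS i hm => hhitA S ⟨hS, i, hm⟩,
    fun i ⟨X, hne, _⟩ => ?_, by simpa using hA, fun C => ?_⟩
  · exact (hne (hconn i).nonempty.some).some.2 (Set.mem_univ _)
  · exact (C.out.2 (Set.mem_univ _)).elim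

/-- Lemma 5.6, for antichains of connected graphs. Let `Z` be a finite
nonempty antichain of connected graphs under the minor relation, `k ≥ 1`, `z, d ∈ ℕ`, let `G`
have a tree decomposition `(T, β)` of adhesion at most `z`, and let `α` assign to every node `t`
a set `α(t) ⊆ β(t)` with `|α(t)| ≤ d` such that `(β(t), α(t))` is a `Z`-local cover of `G`.
Then either `G` contains `k` pairwise vertex-disjoint subgraphs each containing some member of
`Z` as a minor, or there is a `Z`-local cover `(X, A)` of `G` with `G − X` containing no member
of `Z` as a minor, `|A| ≤ (k−1)(z+d)`, and `|N_G(V(C))| ≤ z` for every connected component `C`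
of `G − X`. -/
theorem stmt_12 {ι : Type*} [Fintype ι] [Nonempty ι] {Vf : ι → Type*}
    [∀ i, Fintype (Vf i)] (Z : ∀ i, SimpleGraph (Vf i))
    (hconn : ∀ i, (Z i).Connected)
    (hanti : ∀ i j, i ≠ j → ¬ IsMinorOf (Z i) (Z j))
    {W : Type*} {τ : Type*} [Fintype W] (G : SimpleGraph W)
    (k : ℕ) (hk : 1 ≤ k) (z d : ℕ)
    (D : TreeDecomp G τ)
    (hadh : ∀ t t' : τ, D.tree.Adj t t' → (D.bag t ∩ D.bag t').ncard ≤ z)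
    (α : τ → Set W)
    (hα : ∀ t : τ, (α t).ncard ≤ d ∧ IsLocalCoverFam Z G (D.bag t) (α t)) :
    (∃ M : Fin k → G.Subgraph,
      (∀ a b, a ≠ b → Disjoint (M a).verts (M b).verts) ∧
      ∀ a, ∃ i, IsMinorOf (Z i) ((M a).coe)) ∨
    (∃ X A : Set W, IsLocalCoverFam Z G X A ∧
      (∀ i, ¬ IsMinorOf (Z i) (G.induce Xᶜ)) ∧
      A.ncard ≤ (k - 1) * (z + d) ∧
      ∀ C : (G.induce Xᶜ).ConnectedComponent,
        ({w : W | w ∉ Subtype.val '' C.supp ∧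
            ∃ v ∈ Subtype.val '' C.supp, G.Adj v w}).ncard ≤ z) :=
  stmt_12_general Z hconn G k z d D hadh α hα
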